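/- arXiv:1701.07024 — 9 statements merged into one kernel-verified Lean document; each statement's English description precedes it below -/
import Mathlib

section
/- For a distributive lattice L and a triple (a,b,c) ∈ L³, the triple ⟨(a ∨ (b ∧ c), b ∨ (a ∧ c), c ∨ (a ∧ b))⟩ is balanced (i.e., its three pairwise meets coincide) and is the least balanced triple above (a,b,c) in L³. -/
/-!
By distributivity each pairwise meet of the closure equals the median
`(a ⊓ b) ⊔ (a ⊓ c) ⊔ (b ⊓ c)`, so the closure is balanced. Conversely, if `u ≥ (a, b, c)` is
balanced, then `b ⊓ c ≤ u₂ ⊓ u₃ = u₁ ⊓ u₃ ≤ u₁`, and symmetrically for the other components.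
-/

/-- A triple `(a,b,c)` in a lattice is balanced if `a ⊓ b = a ⊓ c = b ⊓ c`. -/
def IsBalanced3 {L : Type*} [Lattice L] (t : L × L × L) : Prop :=
  t.1 ⊓ t.2.1 = t.1 ⊓ t.2.2 ∧ t.1 ⊓ t.2.2 = t.2.1 ⊓ t.2.2

section Lattice

variable {L : Type*} [Lattice L]

def balancedClosure (t : L × L × L) : L × L × L :=
  (t.1 ⊔ t.2.1 ⊓ t.2.2, t.2.1 ⊔ t.1 ⊓ t.2.2, t.2.2 ⊔ t.1 ⊓ t.2.1)

theorem le_balancedClosure (t : L × L × L) : t ≤ balancedClosure t :=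
  ⟨le_sup_left, le_sup_left, le_sup_left⟩

theorem IsBalanced3.balancedClosure_le {t u : L × L × L} (hu : IsBalanced3 u) (htu : t ≤ u) :
    balancedClosure t ≤ u := by
  obtain ⟨h₁, h₂, h₃⟩ := htu
  obtain ⟨h₁₂, h₂₃⟩ := hu
  refine ⟨sup_le h₁ ?_, sup_le h₂ ?_, sup_le h₃ ?_⟩
  · calc t.2.1 ⊓ t.2.2 ≤ u.2.1 ⊓ u.2.2 := inf_le_inf h₂ h₃
      _ = u.1 ⊓ u.2.2 := h₂₃.symm
      _ ≤ u.1 := inf_le_left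
  · calc t.1 ⊓ t.2.2 ≤ u.1 ⊓ u.2.2 := inf_le_inf h₁ h₃
      _ = u.2.1 ⊓ u.2.2 := h₂₃
      _ ≤ u.2.1 := inf_le_left
  · calc t.1 ⊓ t.2.1 ≤ u.1 ⊓ u.2.1 := inf_le_inf h₁ h₂
      _ = u.2.1 ⊓ u.2.2 := h₁₂.trans h₂₃
      _ ≤ u.2.2 := inf_le_right

end Lattice

section DistribLattice

variable {L : Type*} [DistribLattice L]

theorem sup_inf_inf_sup_inf (x y z : L) :
    (x ⊔ y ⊓ z) ⊓ (y ⊔ x ⊓ z) = x ⊓ y ⊔ x ⊓ z ⊔ y ⊓ z := by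
  rw [inf_sup_left, inf_sup_right, inf_sup_right, inf_of_le_right (inf_le_left : x ⊓ z ≤ x),
    inf_of_le_left (inf_le_left : y ⊓ z ≤ y), sup_of_le_left (inf_le_right : y ⊓ z ⊓ (x ⊓ z) ≤ _),
    sup_right_comm]

theorem isBalanced3_balancedClosure (t : L × L × L) : IsBalanced3 (balancedClosure t) := by
  obtain ⟨a, b, c⟩ := t
  have hab := sup_inf_inf_sup_inf a b c
  have hac := sup_inf_inf_sup_inf a c b
  have hbc := sup_inf_inf_sup_inf b c a
  rw [inf_comm c b] at hac
  rw [inf_comm c a, inf_comm b a] at hbc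
  constructor
  · simp only [balancedClosure]
    rw [hab, hac]
    ac_rfl
  · simp only [balancedClosure]
    rw [hac, hbc]
    ac_rfl

end DistribLattice

theorem stmt0 {L : Type*} [DistribLattice L] (a b c : L) :
    IsBalanced3 (a ⊔ b ⊓ c, b ⊔ a ⊓ c, c ⊔ a ⊓ b) ∧
    (a, b, c) ≤ (a ⊔ b ⊓ c, b ⊔ a ⊓ c, c ⊔ a ⊓ b) ∧
    ∀ u : L × L × L, IsBalanced3 u → (a, b, c) ≤ u →
      (a ⊔ b ⊓ c, b ⊔ a ⊓ c, c ⊔ a ⊓ b) ≤ u :=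
  ⟨isBalanced3_balancedClosure (a, b, c), le_balancedClosure (a, b, c),
    fun _ hu h => hu.balancedClosure_le h⟩
end

section
/- For a distributive lattice L, the set M₃[L] of balanced triples in L³ is closed under componentwise meets: if (a,b,c) and (a',b',c') are balanced, then (a∧a', b∧b', c∧c') is balanced. -/
theorem IsBalanced3.inf {L : Type*} [Lattice L] {s t : L × L × L}
    (hs : IsBalanced3 s) (ht : IsBalanced3 t) : IsBalanced3 (s ⊓ t) := by
  simp only [IsBalanced3, Prod.fst_inf, Prod.snd_inf]
  constructor
  · rw [inf_inf_inf_comm, hs.1, ht.1, inf_inf_inf_comm]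
  · rw [inf_inf_inf_comm, hs.2, ht.2, inf_inf_inf_comm]

theorem stmt2 {L : Type*} [DistribLattice L] (a b c a' b' c' : L)
    (h : IsBalanced3 (a, b, c)) (h' : IsBalanced3 (a', b', c')) :
    IsBalanced3 (a ⊓ a', b ⊓ b', c ⊓ c') :=
  h.inf h'
end

section
/- Let κ be an infinite set. The set T = {(A,B,C) ∈ F(κ)³ : C \ m(A,B,C) finite} is closed under the balanced-closure operation (A,B,C) ↦ (A ∪ m, B ∪ m, C ∪ m) where m = m(A,B,C). -/
open Set

/-- `m(X,Y,Z) = (X∩Y) ∪ (X∩Z) ∪ (Y∩Z)`. -/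
def mSet {κ : Type*} (X Y Z : Set κ) : Set κ := (X ∩ Y) ∪ (X ∩ Z) ∪ (Y ∩ Z)

/-- The finite/cofinite algebra on `κ`. -/
def FinCofin (κ : Type*) : Set (Set κ) := {X | X.Finite ∨ Xᶜ.Finite}

/-- A triple of sets is balanced if its pairwise intersections coincide. -/
def BalancedT {κ : Type*} (t : Set κ × Set κ × Set κ) : Prop :=
  t.1 ∩ t.2.1 = t.1 ∩ t.2.2 ∧ t.1 ∩ t.2.2 = t.2.1 ∩ t.2.2

/-- The set `T` of triples from `F(κ)³` with `C \ m(A,B,C)` finite. -/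
def Tset (κ : Type*) : Set (Set κ × Set κ × Set κ) :=
  {t | t.1 ∈ FinCofin κ ∧ t.2.1 ∈ FinCofin κ ∧ t.2.2 ∈ FinCofin κ ∧
    (t.2.2 \ mSet t.1 t.2.1 t.2.2).Finite}

/-- The lattice `S` of balanced triples in `T`. -/
def Sset (κ : Type*) : Set (Set κ × Set κ × Set κ) :=
  {t | BalancedT t ∧ t ∈ Tset κ}

/-- Componentwise meet (intersection) of triples. -/
def meetT {κ : Type*} (t u : Set κ × Set κ × Set κ) : Set κ × Set κ × Set κ :=
  (t.1 ∩ u.1, t.2.1 ∩ u.2.1, t.2.2 ∩ u.2.2)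

/-- The balanced closure of a triple of sets. -/
def clT {κ : Type*} (t : Set κ × Set κ × Set κ) : Set κ × Set κ × Set κ :=
  (t.1 ∪ (t.2.1 ∩ t.2.2), t.2.1 ∪ (t.1 ∩ t.2.2), t.2.2 ∪ (t.1 ∩ t.2.1))

/-- Join of balanced triples: balanced closure of the componentwise union. -/
def joinT {κ : Type*} (t u : Set κ × Set κ × Set κ) : Set κ × Set κ × Set κ :=
  clT (t.1 ∪ u.1, t.2.1 ∪ u.2.1, t.2.2 ∪ u.2.2)

/-- The Banaschewski map `f(A,B,C) = (κ\A, κ\(B∪C), κ\(A∪B∪C))`. -/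
def fT {κ : Type*} (t : Set κ × Set κ × Set κ) : Set κ × Set κ × Set κ :=
  (t.1ᶜ, (t.2.1 ∪ t.2.2)ᶜ, (t.1 ∪ t.2.1 ∪ t.2.2)ᶜ)

/-- The map `g(A,C) = (A, A∩C, C)`. -/
def gT {κ : Type*} (p : Set κ × Set κ) : Set κ × Set κ × Set κ :=
  (p.1, p.1 ∩ p.2, p.2)

/-- The maximal Boolean sublattice `B = g(A)`. -/
def Bset (κ : Type*) : Set (Set κ × Set κ × Set κ) :=
  {t | ∃ A C : Set κ, A ∈ FinCofin κ ∧ C ∈ FinCofin κ ∧ (symmDiff A C).Finite ∧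
    t = (A, A ∩ C, C)}

lemma finCofin_union {κ : Type*} {X Y : Set κ} (hX : X ∈ FinCofin κ) (hY : Y ∈ FinCofin κ) :
    X ∪ Y ∈ FinCofin κ := by
  rw [FinCofin, mem_ofPred_eq, finite_union, compl_union]
  rcases hX with hX | hX
  · rcases hY with hY | hY
    · exact Or.inl ⟨hX, hY⟩
    · exact Or.inr (hY.subset inter_subset_right)
  · exact Or.inr (hX.subset inter_subset_left)

lemma finCofin_compl {κ : Type*} {X : Set κ} (hX : X ∈ FinCofin κ) : Xᶜ ∈ FinCofin κ := by
  rw [FinCofin, mem_ofPred_eq, compl_compl]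
  exact hX.symm

lemma finCofin_inter {κ : Type*} {X Y : Set κ} (hX : X ∈ FinCofin κ) (hY : Y ∈ FinCofin κ) :
    X ∩ Y ∈ FinCofin κ := by
  simpa only [compl_union, compl_compl] using
    finCofin_compl (finCofin_union (finCofin_compl hX) (finCofin_compl hY))

lemma finCofin_mSet {κ : Type*} {X Y Z : Set κ} (hX : X ∈ FinCofin κ) (hY : Y ∈ FinCofin κ)
    (hZ : Z ∈ FinCofin κ) : mSet X Y Z ∈ FinCofin κ :=
  finCofin_union (finCofin_union (finCofin_inter hX hY) (finCofin_inter hX hZ))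
    (finCofin_inter hY hZ)

lemma mSet_union_distrib {κ : Type*} (X Y Z W : Set κ) :
    mSet (X ∪ W) (Y ∪ W) (Z ∪ W) = mSet X Y Z ∪ W := by
  ext x
  simp only [mSet, mem_union, mem_inter_iff]
  tauto

lemma mSet_union_mSet {κ : Type*} (X Y Z : Set κ) :
    mSet (X ∪ mSet X Y Z) (Y ∪ mSet X Y Z) (Z ∪ mSet X Y Z) = mSet X Y Z := by
  rw [mSet_union_distrib, union_self]

theorem stmt5_general {κ : Type*} (t : Set κ × Set κ × Set κ) (ht : t ∈ Tset κ) :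
    (t.1 ∪ mSet t.1 t.2.1 t.2.2, t.2.1 ∪ mSet t.1 t.2.1 t.2.2,
      t.2.2 ∪ mSet t.1 t.2.1 t.2.2) ∈ Tset κ := by
  obtain ⟨hA, hB, hC, hfin⟩ := ht
  have hm := finCofin_mSet hA hB hC
  refine ⟨finCofin_union hA hm, finCofin_union hB hm, finCofin_union hC hm, ?_⟩
  simpa only [mSet_union_mSet, union_sdiff_right] using hfin

theorem stmt5 {κ : Type*} [Infinite κ] (t : Set κ × Set κ × Set κ) (ht : t ∈ Tset κ) :
    (t.1 ∪ mSet t.1 t.2.1 t.2.2, t.2.1 ∪ mSet t.1 t.2.1 t.2.2,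
      t.2.2 ∪ mSet t.1 t.2.1 t.2.2) ∈ Tset κ :=
  stmt5_general t ht
end

section
/- Let κ be an infinite set and S = {(A,B,C) ∈ F(κ)³ : A∩B = A∩C = B∩C and C \ m(A,B,C) is finite}. Then S is closed under componentwise intersections: if (A,B,C), (A',B',C') ∈ S then (A∩A', B∩B', C∩C') ∈ S. -/
open Set

theorem stmt6 {κ : Type*} [Infinite κ] (A B C A' B' C' : Set κ)
    (h : (A, B, C) ∈ Sset κ) (h' : (A', B', C') ∈ Sset κ) :
    (A ∩ A', B ∩ B', C ∩ C') ∈ Sset κ := by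
  obtain ⟨⟨hb1, hb2⟩, hA, hB, hC, hfin⟩ := h
  obtain ⟨⟨hb1', hb2'⟩, hA', hB', hC', hfin'⟩ := h'
  simp only [BalancedT, mSet] at hb1 hb2 hb1' hb2' hfin hfin'
  have inter_fc : ∀ X Y : Set κ, X ∈ FinCofin κ → Y ∈ FinCofin κ →
      X ∩ Y ∈ FinCofin κ := by
    rintro X Y (hX | hX) hY
    · exact Or.inl (hX.subset Set.inter_subset_left)
    · rcases hY with hY | hY
      · exact Or.inl (hY.subset Set.inter_subset_right)
      · refine Or.inr ?_
        rw [Set.compl_inter]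
        exact hX.union hY
  refine ⟨⟨?_, ?_⟩, inter_fc _ _ hA hA', inter_fc _ _ hB hB',
    inter_fc _ _ hC hC', ?_⟩
  · show (A ∩ A') ∩ (B ∩ B') = (A ∩ A') ∩ (C ∩ C')
    ext x
    have h1 := Set.ext_iff.mp hb1 x
    have h2 := Set.ext_iff.mp hb1' x
    simp only [Set.mem_inter_iff] at *
    tauto
  · show (A ∩ A') ∩ (C ∩ C') = (B ∩ B') ∩ (C ∩ C')
    ext x
    have h1 := Set.ext_iff.mp hb2 x
    have h2 := Set.ext_iff.mp hb2' x
    simp only [Set.mem_inter_iff] at *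
    tauto
  · simp only [mSet]
    refine (hfin.union hfin').subset ?_
    intro x hx
    simp only [Set.mem_diff, Set.mem_inter_iff, Set.mem_union] at hx ⊢
    have h1 := Set.ext_iff.mp hb1 x
    have h2 := Set.ext_iff.mp hb2 x
    have h1' := Set.ext_iff.mp hb1' x
    have h2' := Set.ext_iff.mp hb2' x
    simp only [Set.mem_inter_iff] at h1 h2 h1' h2'
    obtain ⟨⟨hxC, hxC'⟩, hm⟩ := hx
    by_cases hAB : x ∈ A ∧ x ∈ B
    · by_cases hAB' : x ∈ A' ∧ x ∈ B'
      · exact absurd (Or.inl (Or.inl ⟨⟨hAB.1, hAB'.1⟩, hAB.2, hAB'.2⟩)) hm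
      · right
        refine ⟨hxC', fun hmem => hAB' ?_⟩
        rcases hmem with (hh | hh) | hh
        · exact hh
        · exact h1'.mpr hh
        · exact h1'.mpr (h2'.mpr hh)
    · left
      refine ⟨hxC, fun hmem => hAB ?_⟩
      rcases hmem with (hh | hh) | hh
      · exact hh
      · exact h1.mpr hh
      · exact h1.mpr (h2.mpr hh)
end

section
/- Let κ be an infinite set and S the set of balanced triples (A,B,C) ∈ F(κ)³ with C \ m(A,B,C) finite. The map f(A,B,C) = (κ\A, κ\(B∪C), κ\(A∪B∪C)) maps S into S. -/
open Set

section

variable {κ : Type*}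

lemma compl_mem_finCofin {X : Set κ} (h : X ∈ FinCofin κ) : Xᶜ ∈ FinCofin κ := by
  rcases h with h | h
  · exact Or.inr (by rwa [compl_compl])
  · exact Or.inl h

lemma union_mem_finCofin {X Y : Set κ} (hX : X ∈ FinCofin κ) (hY : Y ∈ FinCofin κ) :
    X ∪ Y ∈ FinCofin κ := by
  change (X ∪ Y).Finite ∨ (X ∪ Y)ᶜ.Finite
  rw [compl_union]
  rcases hX with hX | hX
  · rcases hY with hY | hY
    · exact Or.inl (hX.union hY)
    · exact Or.inr (hY.subset inter_subset_right)
  · exact Or.inr (hX.subset inter_subset_left)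

lemma balancedT_of_inter_eq {X Y Z : Set κ} (h : X ∩ Y = Z) : BalancedT (X, Y, Z) := by
  subst h
  have hX : X ∩ (X ∩ Y) = X ∩ Y := inter_eq_right.2 inter_subset_left
  have hY : Y ∩ (X ∩ Y) = X ∩ Y := inter_eq_right.2 inter_subset_right
  exact ⟨hX.symm, hX.trans hY.symm⟩

lemma diff_mSet_eq_empty_of_inter_eq {X Y Z : Set κ} (h : X ∩ Y = Z) :
    Z \ mSet X Y Z = ∅ := by
  subst h
  exact sdiff_eq_empty.2 (subset_union_left.trans subset_union_left)

lemma fT_fst_inter_snd (t : Set κ × Set κ × Set κ) : (fT t).1 ∩ (fT t).2.1 = (fT t).2.2 := by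
  simp only [fT, ← compl_union, union_assoc]

end

theorem stmt7_general {κ : Type*} (t : Set κ × Set κ × Set κ) (ht : t ∈ Sset κ) :
    fT t ∈ Sset κ := by
  obtain ⟨A, B, C⟩ := t
  obtain ⟨-, hA, hB, hC, -⟩ := ht
  have hinter := fT_fst_inter_snd (A, B, C)
  refine ⟨balancedT_of_inter_eq hinter, compl_mem_finCofin hA,
    compl_mem_finCofin (union_mem_finCofin hB hC),
    compl_mem_finCofin (union_mem_finCofin (union_mem_finCofin hA hB) hC), ?_⟩
  rw [diff_mSet_eq_empty_of_inter_eq hinter]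
  exact finite_empty

theorem stmt7 {κ : Type*} [Infinite κ] (t : Set κ × Set κ × Set κ) (ht : t ∈ Sset κ) :
    fT t ∈ Sset κ :=
  stmt7_general t ht
end

section
/- Let κ be infinite, S the lattice of balanced triples (A,B,C) ∈ F(κ)³ with C \ m(A,B,C) finite, and B = {(A, A∩C, C) : A,C ∈ F(κ), A Δ C finite}. Suppose (A,B,C) ∈ S \ B with B ⊆ A, and (A',B',C') ∈ S is a complement of (A,B,C) in S (meet is (∅,∅,∅), join is (κ,κ,κ)). Then B' ⊄ A'. -/
open Set

/-!
Since `B ⊆ A`, balance forces `B = A ∩ C`, so `m(A,B,C) = A ∩ C` and `C \ A` is finite; as the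
triple is not in `Bset κ`, `A Δ C` and hence `A \ C` is infinite, so `A` is cofinite. If also
`B' ⊆ A'`, then `C' \ A'` is finite, and `A ∩ A' = ∅` makes `A'`, hence `B' ∪ C'`, finite. But the
second component of the join being `κ` forces `A \ C ⊆ B' ∪ C'`.
-/

section

variable {κ : Type*} {A B C A' B' C' : Set κ}

lemma BalancedT.snd_eq_inter_of_subset (hbal : BalancedT (A, B, C)) (hBA : B ⊆ A) :
    B = A ∩ C := by
  rw [← hbal.1, inter_eq_right.mpr hBA]

lemma mSet_inter_self_left (A C : Set κ) : mSet A (A ∩ C) C = A ∩ C := by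
  ext
  simp only [mSet, mem_union, mem_inter_iff]
  tauto

lemma finite_diff_of_mem_Sset_of_subset (h : (A, B, C) ∈ Sset κ) (hBA : B ⊆ A) :
    (C \ A).Finite := by
  obtain ⟨hbal, -, -, -, hfin⟩ := h
  rwa [hbal.snd_eq_inter_of_subset hBA, mSet_inter_self_left, sdiff_inter_self_eq_sdiff] at hfin

lemma infinite_diff_of_notMem_Bset (h : (A, B, C) ∈ Sset κ) (hBA : B ⊆ A)
    (hnB : (A, B, C) ∉ Bset κ) : (A \ C).Infinite := by
  intro hfin
  refine hnB ⟨A, C, h.2.1, h.2.2.2.1, ?_, by rw [h.1.snd_eq_inter_of_subset hBA]⟩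
  rw [symmDiff_def]
  exact hfin.union (finite_diff_of_mem_Sset_of_subset h hBA)

lemma finite_of_disjoint_of_infinite_of_mem_FinCofin (hA : A ∈ FinCofin κ) (hinf : A.Infinite)
    (hdisj : Disjoint A A') : A'.Finite :=
  (hA.resolve_left hinf).subset hdisj.subset_compl_left

lemma finite_union_of_mem_Sset_of_subset (h : (A, B, C) ∈ Sset κ) (hBA : B ⊆ A)
    (hA : A.Finite) : (B ∪ C).Finite :=
  (hA.subset hBA).union ((finite_diff_of_mem_Sset_of_subset h hBA).of_sdiff hA)

lemma diff_subset_of_joinT_snd_eq_univ (hBC : B ⊆ C)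
    (hjoin : (joinT (A, B, C) (A', B', C')).2.1 = univ) : A \ C ⊆ B' ∪ C' := by
  intro x ⟨hxA, hxC⟩
  have hx : x ∈ (joinT (A, B, C) (A', B', C')).2.1 := hjoin ▸ mem_univ x
  rcases hx with (hxB | hxB') | ⟨-, hxC₀ | hxC'⟩
  · exact absurd (hBC hxB) hxC
  · exact Or.inl hxB'
  · exact absurd hxC₀ hxC
  · exact Or.inr hxC'

end

theorem stmt15_general {κ : Type*} (A B C A' B' C' : Set κ)
    (h : (A, B, C) ∈ Sset κ) (hnB : (A, B, C) ∉ Bset κ) (hBA : B ⊆ A)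
    (h' : (A', B', C') ∈ Sset κ)
    (hmeet : meetT (A, B, C) (A', B', C') = ((∅, ∅, ∅) : Set κ × Set κ × Set κ))
    (hjoin : joinT (A, B, C) (A', B', C') = ((univ, univ, univ) : Set κ × Set κ × Set κ)) :
    ¬ B' ⊆ A' := by
  intro hB'A'
  have hAC : (A \ C).Infinite := infinite_diff_of_notMem_Bset h hBA hnB
  have hBC : B ⊆ C := (h.1.snd_eq_inter_of_subset hBA).trans_subset inter_subset_right
  have hA' : A'.Finite :=
    finite_of_disjoint_of_infinite_of_mem_FinCofin h.2.1 (hAC.mono sdiff_subset)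
      (disjoint_iff_inter_eq_empty.mpr (congrArg Prod.fst hmeet))
  exact hAC ((finite_union_of_mem_Sset_of_subset h' hB'A' hA').subset
    (diff_subset_of_joinT_snd_eq_univ hBC (congrArg (·.2.1) hjoin)))

theorem stmt15 {κ : Type*} [Infinite κ] (A B C A' B' C' : Set κ)
    (h : (A, B, C) ∈ Sset κ) (hnB : (A, B, C) ∉ Bset κ) (hBA : B ⊆ A)
    (h' : (A', B', C') ∈ Sset κ)
    (hmeet : meetT (A, B, C) (A', B', C') = ((∅, ∅, ∅) : Set κ × Set κ × Set κ))
    (hjoin : joinT (A, B, C) (A', B', C') = ((univ, univ, univ) : Set κ × Set κ × Set κ)) :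
    ¬ B' ⊆ A' :=
  stmt15_general A B C A' B' C' h hnB hBA h' hmeet hjoin
end

section
/- Let κ be infinite and B = {(A, A∩C, C) : A,C ∈ F(κ), A Δ C finite}, a sublattice of the lattice S of balanced triples in F(κ)³ with C \ m finite. Then B is a maximal Boolean sublattice of S: any complemented bounded sublattice C of S properly containing B fails distributivity. Specifically, if (A,B,C) ∈ C has B ⊄ A, then choosing a finite nonempty F ⊆ B\A, the elements g(F,∅), g(∅,F) ∈ B witness failure of the distributive law with (A,B,C). -/
open Set

/-!
An element `(a, b, c)` of a sublattice of `S` with `b ⊆ a` is, by balance, of the form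
`g(a, c)`, and then `c \ a` is exactly `c \ m(a, b, c)`, hence finite. If every element of a
complemented sublattice has this shape, the complement of `g(a, c)` is forced to be
`g(aᶜ, cᶜ)`, which gives `a \ c` finite as well, so the sublattice lies inside `B`. Otherwise
some `(a, b, c)` has a point of `b` outside `a`, and balance keeps that point outside `c`;
meeting `(a, b, c)` with `g({x}, ∅)`, `g(∅, {x})` and their join `({x}, {x}, {x})` breaks
distributivity.
-/

section

variable {κ : Type*}

lemma gT_mem_Bset {A C : Set κ} (hA : A ∈ FinCofin κ) (hC : C ∈ FinCofin κ)
    (hAC : (symmDiff A C).Finite) : gT (A, C) ∈ Bset κ :=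
  ⟨A, C, hA, hC, hAC, rfl⟩

lemma gT_finite_empty_mem_Bset {F : Set κ} (hF : F.Finite) : gT (F, ∅) ∈ Bset κ :=
  gT_mem_Bset (Or.inl hF) (Or.inl finite_empty) (by rwa [← bot_eq_empty, symmDiff_bot])

lemma gT_empty_finite_mem_Bset {F : Set κ} (hF : F.Finite) : gT (∅, F) ∈ Bset κ :=
  gT_mem_Bset (Or.inl finite_empty) (Or.inl hF) (by rwa [← bot_eq_empty, bot_symmDiff])

namespace BalancedT

variable {a b c : Set κ}

lemma inter_subset_fst (h : BalancedT (a, b, c)) : b ∩ c ⊆ a := by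
  rw [← h.2]
  exact inter_subset_left

lemma snd_eq_inter (h : BalancedT (a, b, c)) (hba : b ⊆ a) : b = a ∩ c := by
  rw [← h.1, inter_eq_right.mpr hba]

lemma disjoint_thd_of_subset_diff {F : Set κ} (h : BalancedT (a, b, c)) (hF : F ⊆ b \ a) :
    Disjoint c F :=
  disjoint_right.mpr fun _ hx hxc => (hF hx).2 (h.inter_subset_fst ⟨(hF hx).1, hxc⟩)

end BalancedT

section Distributivity

variable {a b c F : Set κ}

lemma joinT_gT_left_gT_right (F : Set κ) : joinT (gT (F, ∅)) (gT (∅, F)) = (F, F, F) := by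
  simp [joinT, gT, clT]

lemma meetT_joinT_gT_of_subset_diff (h : BalancedT (a, b, c)) (hF : F ⊆ b \ a) :
    meetT (a, b, c) (joinT (gT (F, ∅)) (gT (∅, F))) = (∅, F, ∅) := by
  have hcF := h.disjoint_thd_of_subset_diff hF
  have haF : Disjoint a F := (disjoint_sdiff_left.mono_left hF).symm
  rw [joinT_gT_left_gT_right]
  simp only [meetT, haF.inter_eq, hcF.inter_eq,
    inter_eq_right.mpr (hF.trans sdiff_subset)]

lemma joinT_meetT_gT_of_subset_diff (h : BalancedT (a, b, c)) (hF : F ⊆ b \ a) :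
    joinT (meetT (a, b, c) (gT (F, ∅))) (meetT (a, b, c) (gT (∅, F))) = (∅, ∅, ∅) := by
  have hcF := h.disjoint_thd_of_subset_diff hF
  have haF : Disjoint a F := (disjoint_sdiff_left.mono_left hF).symm
  simp [meetT, gT, joinT, clT, haF.inter_eq, hcF.inter_eq]

end Distributivity

section Boolean

variable {a c a' c' : Set κ}

lemma mSet_inter_self (a c : Set κ) : mSet a (a ∩ c) c = a ∩ c := by
  ext
  simp only [mSet, mem_union, mem_inter_iff]
  tauto

lemma diff_finite_of_mem_Tset (h : (a, a ∩ c, c) ∈ Tset κ) : (c \ a).Finite := by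
  simpa only [mSet_inter_self, sdiff_inter_self_eq_sdiff] using h.2.2.2

lemma compl_eq_of_meetT_joinT (hm : meetT (a, a ∩ c, c) (a', a' ∩ c', c') = (∅, ∅, ∅))
    (hj : joinT (a, a ∩ c, c) (a', a' ∩ c', c') = (univ, univ, univ)) :
    aᶜ = a' ∧ cᶜ = c' := by
  simp only [meetT, joinT, clT, Prod.mk.injEq] at hm hj
  have ha : a ∪ a' = univ := by
    rw [← hj.1]
    ext
    simp only [mem_union, mem_inter_iff]
    tauto
  have hc : c ∪ c' = univ := by
    rw [← hj.2.2]
    ext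
    simp only [mem_union, mem_inter_iff]
    tauto
  exact ⟨(IsCompl.of_eq hm.1 ha).compl_eq, (IsCompl.of_eq hm.2.2 hc).compl_eq⟩

lemma gT_mem_Bset_of_compl (ht : (a, a ∩ c, c) ∈ Tset κ) (hu : (a', a' ∩ c', c') ∈ Tset κ)
    (hm : meetT (a, a ∩ c, c) (a', a' ∩ c', c') = (∅, ∅, ∅))
    (hj : joinT (a, a ∩ c, c) (a', a' ∩ c', c') = (univ, univ, univ)) :
    gT (a, c) ∈ Bset κ := by
  obtain ⟨rfl, rfl⟩ := compl_eq_of_meetT_joinT hm hj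
  have hac : (a \ c).Finite := by simpa only [compl_sdiff_compl] using diff_finite_of_mem_Tset hu
  exact gT_mem_Bset ht.1 ht.2.2.1 (symmDiff_def a c ▸ hac.union (diff_finite_of_mem_Tset ht))

lemma subset_Bset_of_forall_snd_subset_fst {Cs : Set (Set κ × Set κ × Set κ)}
    (hCs : Cs ⊆ Sset κ)
    (hcompl : ∀ t ∈ Cs, ∃ u ∈ Cs, meetT t u = (∅, ∅, ∅) ∧ joinT t u = (univ, univ, univ))
    (hsub : ∀ t ∈ Cs, t.2.1 ⊆ t.1) : Cs ⊆ Bset κ := by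
  rintro ⟨a, b, c⟩ ht
  obtain ⟨⟨a', b', c'⟩, hu, hm, hj⟩ := hcompl _ ht
  obtain rfl := (hCs ht).1.snd_eq_inter (hsub _ ht)
  obtain rfl := (hCs hu).1.snd_eq_inter (hsub _ hu)
  exact gT_mem_Bset_of_compl (hCs ht).2 (hCs hu).2 hm hj

end Boolean

end

theorem stmt16_general {κ : Type*} :
    (∀ Cs : Set (Set κ × Set κ × Set κ), Cs ⊆ Sset κ →
      (∀ t ∈ Cs, ∀ u ∈ Cs, meetT t u ∈ Cs) →
      (∀ t ∈ Cs, ∀ u ∈ Cs, joinT t u ∈ Cs) →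
      ((∅, ∅, ∅) : Set κ × Set κ × Set κ) ∈ Cs →
      ((univ, univ, univ) : Set κ × Set κ × Set κ) ∈ Cs →
      (∀ t ∈ Cs, ∃ u ∈ Cs, meetT t u = ((∅, ∅, ∅) : Set κ × Set κ × Set κ) ∧
        joinT t u = ((univ, univ, univ) : Set κ × Set κ × Set κ)) →
      Bset κ ⊂ Cs →
      ∃ x ∈ Cs, ∃ y ∈ Cs, ∃ z ∈ Cs,
        meetT x (joinT y z) ≠ joinT (meetT x y) (meetT x z)) ∧
    (∀ A B C : Set κ, (A, B, C) ∈ Sset κ → ¬ B ⊆ A →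
      ∀ F : Set κ, F.Finite → F.Nonempty → F ⊆ B \ A →
        gT (F, ∅) ∈ Bset κ ∧ gT (∅, F) ∈ Bset κ ∧
        meetT (A, B, C) (joinT (gT (F, ∅)) (gT (∅, F))) = ((∅, F, ∅) : Set κ × Set κ × Set κ) ∧
        joinT (meetT (A, B, C) (gT (F, ∅))) (meetT (A, B, C) (gT (∅, F))) =
          ((∅, ∅, ∅) : Set κ × Set κ × Set κ)) := by
  refine ⟨fun Cs hCs _ _ _ _ hcompl hB => ?_, fun A B C hS _ F hF _ hFBA =>
    ⟨gT_finite_empty_mem_Bset hF, gT_empty_finite_mem_Bset hF,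
      meetT_joinT_gT_of_subset_diff hS.1 hFBA, joinT_meetT_gT_of_subset_diff hS.1 hFBA⟩⟩
  obtain ⟨⟨a, b, c⟩, ht, hba⟩ : ∃ t ∈ Cs, ¬ t.2.1 ⊆ t.1 := by
    by_contra! h
    exact hB.2 (subset_Bset_of_forall_snd_subset_fst hCs hcompl h)
  obtain ⟨x, hxb, hxa⟩ := not_subset.mp hba
  have hx : {x} ⊆ b \ a := singleton_subset_iff.mpr ⟨hxb, hxa⟩
  refine ⟨(a, b, c), ht, gT ({x}, ∅), hB.1 (gT_finite_empty_mem_Bset (finite_singleton x)),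
    gT (∅, {x}), hB.1 (gT_empty_finite_mem_Bset (finite_singleton x)), ?_⟩
  rw [meetT_joinT_gT_of_subset_diff (hCs ht).1 hx, joinT_meetT_gT_of_subset_diff (hCs ht).1 hx]
  simp

theorem stmt16 {κ : Type*} [Infinite κ] :
    (∀ Cs : Set (Set κ × Set κ × Set κ), Cs ⊆ Sset κ →
      (∀ t ∈ Cs, ∀ u ∈ Cs, meetT t u ∈ Cs) →
      (∀ t ∈ Cs, ∀ u ∈ Cs, joinT t u ∈ Cs) →
      ((∅, ∅, ∅) : Set κ × Set κ × Set κ) ∈ Cs →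
      ((univ, univ, univ) : Set κ × Set κ × Set κ) ∈ Cs →
      (∀ t ∈ Cs, ∃ u ∈ Cs, meetT t u = ((∅, ∅, ∅) : Set κ × Set κ × Set κ) ∧
        joinT t u = ((univ, univ, univ) : Set κ × Set κ × Set κ)) →
      Bset κ ⊂ Cs →
      ∃ x ∈ Cs, ∃ y ∈ Cs, ∃ z ∈ Cs,
        meetT x (joinT y z) ≠ joinT (meetT x y) (meetT x z)) ∧
    (∀ A B C : Set κ, (A, B, C) ∈ Sset κ → ¬ B ⊆ A →
      ∀ F : Set κ, F.Finite → F.Nonempty → F ⊆ B \ A →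
        gT (F, ∅) ∈ Bset κ ∧ gT (∅, F) ∈ Bset κ ∧
        meetT (A, B, C) (joinT (gT (F, ∅)) (gT (∅, F))) = ((∅, F, ∅) : Set κ × Set κ × Set κ) ∧
        joinT (meetT (A, B, C) (gT (F, ∅))) (meetT (A, B, C) (gT (∅, F))) =
          ((∅, ∅, ∅) : Set κ × Set κ × Set κ)) :=
  stmt16_general
end

section
/- Let κ be infinite and S the lattice of balanced triples in F(κ)³ with C \ m(A,B,C) finite. No complement of (κ,∅,∅) in S belongs to B = {(A,A∩C,C) : A,C ∈ F(κ), A Δ C finite}. Consequently, B is not the range of any Banaschewski function on S. -/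
/-!
A complement `(A, B, C)` of `(κ, ∅, ∅)` has `A = ∅` (meet) and `B ∪ C = κ` (middle component of
the join). Inside `B` the middle entry is `A ∩ C`, so `B = ∅` and `C = κ`; but then
`C \ m(A, B, C) = κ`, which is infinite. Hence a Banaschewski function cannot take the value
`f (κ, ∅, ∅)` in `B`, let alone have range `B`.
-/

open Set

section

variable {κ : Type*}

lemma fst_eq_empty_of_meetT_eq {t : Set κ × Set κ × Set κ}
    (h : meetT ((univ, ∅, ∅) : Set κ × Set κ × Set κ) t = (∅, ∅, ∅)) : t.1 = ∅ := by
  simpa [meetT] using congrArg Prod.fst h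

lemma snd_union_thd_eq_univ_of_joinT_eq {t : Set κ × Set κ × Set κ}
    (h : joinT ((univ, ∅, ∅) : Set κ × Set κ × Set κ) t = (univ, univ, univ)) :
    t.2.1 ∪ t.2.2 = univ := by
  simpa [joinT, clT] using congrArg (fun p => p.2.1) h

lemma snd_eq_empty_of_mem_Bset {t : Set κ × Set κ × Set κ} (ht : t ∈ Bset κ)
    (h : t.1 = ∅) : t.2.1 = ∅ := by
  obtain ⟨A, C, -, -, -, rfl⟩ := ht
  simp_all

lemma thd_finite_of_mem_Tset {t : Set κ × Set κ × Set κ} (ht : t ∈ Tset κ)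
    (h₁ : t.1 = ∅) (h₂ : t.2.1 = ∅) : t.2.2.Finite := by
  simpa [mSet, h₁, h₂] using ht.2.2.2

lemma univ_empty_empty_mem_Sset : ((univ, ∅, ∅) : Set κ × Set κ × Set κ) ∈ Sset κ :=
  ⟨⟨by simp, by simp⟩, Or.inr (by simp), Or.inl finite_empty, Or.inl finite_empty,
    by simp [mSet]⟩

lemma notMem_Bset_of_isCompl_univ_empty_empty [Infinite κ] {t : Set κ × Set κ × Set κ}
    (ht : t ∈ Tset κ)
    (hmeet : meetT ((univ, ∅, ∅) : Set κ × Set κ × Set κ) t = (∅, ∅, ∅))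
    (hjoin : joinT ((univ, ∅, ∅) : Set κ × Set κ × Set κ) t = (univ, univ, univ)) :
    t ∉ Bset κ := by
  intro htB
  have hA := fst_eq_empty_of_meetT_eq hmeet
  have hB := snd_eq_empty_of_mem_Bset htB hA
  have hC : t.2.2 = univ := by
    simpa [hB] using snd_union_thd_eq_univ_of_joinT_eq hjoin
  exact infinite_univ (hC ▸ thd_finite_of_mem_Tset ht hA hB)

end

theorem stmt17 {κ : Type*} [Infinite κ] :
    (∀ t ∈ Sset κ,
      meetT ((univ, ∅, ∅) : Set κ × Set κ × Set κ) t = ((∅, ∅, ∅) : Set κ × Set κ × Set κ) →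
      joinT ((univ, ∅, ∅) : Set κ × Set κ × Set κ) t = ((univ, univ, univ) : Set κ × Set κ × Set κ) →
      t ∉ Bset κ) ∧
    ¬ ∃ f : Set κ × Set κ × Set κ → Set κ × Set κ × Set κ,
      (∀ t ∈ Sset κ, f t ∈ Sset κ) ∧
      (∀ t ∈ Sset κ, ∀ u ∈ Sset κ, t.1 ⊆ u.1 → t.2.1 ⊆ u.2.1 → t.2.2 ⊆ u.2.2 →
        (f u).1 ⊆ (f t).1 ∧ (f u).2.1 ⊆ (f t).2.1 ∧ (f u).2.2 ⊆ (f t).2.2) ∧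
      (∀ t ∈ Sset κ, meetT t (f t) = ((∅, ∅, ∅) : Set κ × Set κ × Set κ) ∧
        joinT t (f t) = ((univ, univ, univ) : Set κ × Set κ × Set κ)) ∧
      f '' Sset κ = Bset κ := by
  refine ⟨fun t ht => notMem_Bset_of_isCompl_univ_empty_empty ht.2, ?_⟩
  rintro ⟨f, hfS, -, hcompl, hrange⟩
  have he := univ_empty_empty_mem_Sset (κ := κ)
  exact notMem_Bset_of_isCompl_univ_empty_empty (hfS _ he).2 (hcompl _ he).1 (hcompl _ he).2
    (hrange ▸ mem_image_of_mem f he)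
end

section
/- Let κ be an infinite set, F a field, and V the F-vector space presented by generators x_α, y_α, z_α (α ∈ κ) subject to relations x_α + y_α + z_α = 0. Define F(A,B,C) = Span{x_α : α∈A} + Span{y_β : β∈B} + Span{z_γ : γ∈C}. Then for any A,B,C ⊆ κ, {α : x_α ∈ F(A,B,C)} = A ∪ (B ∩ C), and symmetrically for y and z; hence the map W ↦ ({α : x_α ∈ W}, {β : y_β ∈ W}, {γ : z_γ ∈ W}) composed with F is exactly the balanced closure operator on P(κ)³. -/
open Set Submodule

/-- The vector space presented by generators `x_α, y_α, z_α` with relations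
`x_α + y_α + z_α = 0`, realized concretely so that `{x_α, y_α}` is a basis. -/
abbrev Vsp (K κ : Type*) [Field K] := (κ →₀ K) × (κ →₀ K)

noncomputable def xv (K : Type*) [Field K] {κ : Type*} (α : κ) : Vsp K κ := (Finsupp.single α 1, 0)

noncomputable def yv (K : Type*) [Field K] {κ : Type*} (α : κ) : Vsp K κ := (0, Finsupp.single α 1)

noncomputable def zv (K : Type*) [Field K] {κ : Type*} (α : κ) : Vsp K κ := - xv K α - yv K α

/-- `F(A,B,C) = Span{x_α : α∈A} + Span{y_β : β∈B} + Span{z_γ : γ∈C}`. -/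
noncomputable def FF (K : Type*) [Field K] {κ : Type*} (A B C : Set κ) : Submodule K (Vsp K κ) :=
  Submodule.span K (xv K '' A) ⊔ Submodule.span K (yv K '' B) ⊔ Submodule.span K (zv K '' C)

noncomputable def phi (K : Type*) [Field K] {κ : Type*} (α : κ) (a b : K) :
    Vsp K κ →ₗ[K] K :=
  a • (Finsupp.lapply α ∘ₗ LinearMap.fst K (κ →₀ K) (κ →₀ K)) +
    b • (Finsupp.lapply α ∘ₗ LinearMap.snd K (κ →₀ K) (κ →₀ K))

lemma phi_x (K : Type*) [Field K] {κ : Type*} [DecidableEq κ] (α β : κ) (a b : K) :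
    phi K α a b (xv K β) = if β = α then a else 0 := by
  simp [phi, xv, Finsupp.single_apply]

lemma phi_y (K : Type*) [Field K] {κ : Type*} [DecidableEq κ] (α β : κ) (a b : K) :
    phi K α a b (yv K β) = if β = α then b else 0 := by
  simp [phi, yv, Finsupp.single_apply]

lemma phi_z (K : Type*) [Field K] {κ : Type*} [DecidableEq κ] (α β : κ) (a b : K) :
    phi K α a b (zv K β) = if β = α then -(a + b) else 0 := by
  simp [zv, phi_x, phi_y]
  split <;> ring

lemma FF_le_ker (K : Type*) [Field K] {κ : Type*} (α : κ) (a b : K) (A B C : Set κ)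
    (hA : α ∈ A → a = 0) (hB : α ∈ B → b = 0) (hC : α ∈ C → a + b = 0) :
    FF K A B C ≤ LinearMap.ker (phi K α a b) := by
  classical
  refine sup_le (sup_le (span_le.2 ?_) (span_le.2 ?_)) (span_le.2 ?_) <;>
    rintro _ ⟨β, hβ, rfl⟩ <;> simp only [SetLike.mem_coe, LinearMap.mem_ker]
  · rw [phi_x]; split
    · next h => exact hA (h ▸ hβ)
    · rfl
  · rw [phi_y]; split
    · next h => exact hB (h ▸ hβ)
    · rfl
  · rw [phi_z]; split
    · next h => rw [hC (h ▸ hβ)]; ring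
    · rfl

lemma x_mem (K : Type*) [Field K] {κ : Type*} (A B C : Set κ) (α : κ) (h : α ∈ A) :
    xv K α ∈ FF K A B C :=
  Submodule.mem_sup_left (Submodule.mem_sup_left (subset_span (mem_image_of_mem _ h)))

lemma y_mem (K : Type*) [Field K] {κ : Type*} (A B C : Set κ) (α : κ) (h : α ∈ B) :
    yv K α ∈ FF K A B C :=
  Submodule.mem_sup_left (Submodule.mem_sup_right (subset_span (mem_image_of_mem _ h)))

lemma z_mem (K : Type*) [Field K] {κ : Type*} (A B C : Set κ) (α : κ) (h : α ∈ C) :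
    zv K α ∈ FF K A B C :=
  Submodule.mem_sup_right (subset_span (mem_image_of_mem _ h))

theorem stmt18 (K : Type*) [Field K] {κ : Type*} [Infinite κ] (A B C : Set κ) :
    {α : κ | xv K α ∈ FF K A B C} = A ∪ (B ∩ C) ∧
    {β : κ | yv K β ∈ FF K A B C} = B ∪ (A ∩ C) ∧
    {γ : κ | zv K γ ∈ FF K A B C} = C ∪ (A ∩ B) := by
  classical
  refine ⟨?_, ?_, ?_⟩ <;> ext α <;> simp only [mem_setOf_eq, mem_union, mem_inter_iff] <;>
    constructor
  · intro h
    by_contra hc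
    push_neg at hc
    obtain ⟨hA, hBC⟩ := hc
    by_cases hB : α ∈ B
    · have hC : α ∉ C := fun h' => hBC hB h'
      have hk := FF_le_ker K α 1 0 A B C (fun h' => absurd h' hA) (fun _ => rfl)
        (fun h' => absurd h' hC) h
      simp [LinearMap.mem_ker, phi_x] at hk
    · have hk := FF_le_ker K α 1 (-1) A B C (fun h' => absurd h' hA)
        (fun h' => absurd h' hB) (fun _ => by ring) h
      simp [LinearMap.mem_ker, phi_x] at hk
  · rintro (h | ⟨hB, hC⟩)
    · exact x_mem K A B C α h
    · have : xv K α = -zv K α - yv K α := by simp [zv]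
      rw [this]
      exact sub_mem (neg_mem (z_mem K A B C α hC)) (y_mem K A B C α hB)
  · intro h
    by_contra hc
    push_neg at hc
    obtain ⟨hB, hAC⟩ := hc
    by_cases hA : α ∈ A
    · have hC : α ∉ C := fun h' => hAC hA h'
      have hk := FF_le_ker K α 0 1 A B C (fun _ => rfl) (fun h' => absurd h' hB)
        (fun h' => absurd h' hC) h
      simp [LinearMap.mem_ker, phi_y] at hk
    · have hk := FF_le_ker K α (-1) 1 A B C (fun h' => absurd h' hA)
        (fun h' => absurd h' hB) (fun _ => by ring) h
      simp [LinearMap.mem_ker, phi_y] at hk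
  · rintro (h | ⟨hA, hC⟩)
    · exact y_mem K A B C α h
    · have : yv K α = -zv K α - xv K α := by simp [zv]
      rw [this]
      exact sub_mem (neg_mem (z_mem K A B C α hC)) (x_mem K A B C α hA)
  · intro h
    by_contra hc
    push_neg at hc
    obtain ⟨hC, hAB⟩ := hc
    by_cases hA : α ∈ A
    · have hB : α ∉ B := fun h' => hAB hA h'
      have hk := FF_le_ker K α 0 1 A B C (fun _ => rfl) (fun h' => absurd h' hB)
        (fun h' => absurd h' hC) h
      simp [LinearMap.mem_ker, phi_z] at hk
    · have hk := FF_le_ker K α 1 0 A B C (fun h' => absurd h' hA) (fun _ => rfl)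
        (fun h' => absurd h' hC) h
      simp [LinearMap.mem_ker, phi_z] at hk
  · rintro (h | ⟨hA, hB⟩)
    · exact z_mem K A B C α h
    · rw [zv]
      exact sub_mem (neg_mem (x_mem K A B C α hA)) (y_mem K A B C α hB)
end
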